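/- arXiv:1501.00576 — 4 statements merged into one kernel-verified Lean document; each statement's English description precedes it below -/
import Mathlib

section
/- Let n ≥ 1 and let γ₁ > γ₂ > ⋯ > γₙ = 0 be natural numbers. The n×n Stäckel matrix S with entries S_{ij} = λ_i^{γ_j} has nonzero determinant whenever the λ_i are pairwise distinct positive real numbers. -/
open Polynomial Finset

/-- Rolle for polynomials: between two roots there is a root of the derivative. -/
private lemma poly_rolle (q : ℝ[X]) {a b : ℝ} (hab : a < b) (ha : q.eval a = 0)
    (hb : q.eval b = 0) : ∃ c ∈ Set.Ioo a b, q.derivative.eval c = 0 := by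
  have := exists_hasDerivAt_eq_zero (f := fun x => q.eval x)
    (f' := fun x => q.derivative.eval x) hab (q.continuous.continuousOn)
    (show q.eval a = q.eval b by rw [ha, hb]) (fun x _ => q.hasDerivAt x)
  simpa using this

/-- The derivative strictly decreases the support count when the constant term is nonzero. -/
private lemma deriv_support_lt (q : ℝ[X]) (h0 : q.coeff 0 ≠ 0) :
    q.derivative.support.card < q.support.card := by
  have hsub : q.derivative.support ⊆ (q.support.erase 0).image (· - 1) := by
    intro d hd
    rw [Polynomial.mem_support_iff, Polynomial.coeff_derivative] at hd
    have : q.coeff (d + 1) ≠ 0 := fun h => hd (by simp [h])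
    refine Finset.mem_image.2 ⟨d + 1, Finset.mem_erase.2 ⟨by omega, Polynomial.mem_support_iff.2 this⟩, by omega⟩
  calc q.derivative.support.card ≤ ((q.support.erase 0).image (· - 1)).card :=
        Finset.card_le_card hsub
    _ ≤ (q.support.erase 0).card := Finset.card_image_le
    _ < q.support.card :=
        Finset.card_erase_lt_of_mem (Polynomial.mem_support_iff.2 h0)

/-- Key lemma: a nonzero real polynomial has fewer distinct positive roots than
nonzero terms. -/
private lemma roots_lt_support_card : ∀ (k : ℕ) (p : ℝ[X]), p ≠ 0 → p.support.card ≤ k →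
    ∀ s : Finset ℝ, (∀ x ∈ s, 0 < x) → (∀ x ∈ s, p.eval x = 0) → s.card < p.support.card := by
  intro k
  induction k with
  | zero =>
    intro p hp hcard s _ _
    exact absurd (Finset.card_eq_zero.mp (Nat.le_zero.mp hcard))
      (fun h => hp (Polynomial.support_eq_empty.mp h))
  | succ k ih =>
    intro p hp hcard s hspos hsroot
    -- strip off the trailing power of X
    set m := p.natTrailingDegree with hm
    obtain ⟨q, hq⟩ : (X : ℝ[X]) ^ m ∣ p := by
      rw [Polynomial.X_pow_dvd_iff]
      exact fun d hd => Polynomial.coeff_eq_zero_of_lt_natTrailingDegree hd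
    have hq0 : q.coeff 0 ≠ 0 := by
      have : p.coeff m = q.coeff 0 := by
        rw [hq]; simpa using Polynomial.coeff_X_pow_mul q m 0
      rw [← this]
      exact Polynomial.trailingCoeff_nonzero_iff_nonzero.2 hp
    have hqne : q ≠ 0 := fun h => hq0 (by simp [h])
    -- supports have the same cardinality
    have hsupp : p.support = q.support.image (m + ·) := by
      ext d
      simp only [Polynomial.mem_support_iff, Finset.mem_image]
      constructor
      · intro hd
        have hdm : m ≤ d := Polynomial.natTrailingDegree_le_of_ne_zero hd
        refine ⟨d - m, ?_, by omega⟩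
        have : p.coeff ((d - m) + m) = q.coeff (d - m) := by
          rw [hq]; exact Polynomial.coeff_X_pow_mul q m (d - m)
        rw [show (d - m) + m = d by omega] at this
        rwa [← this]
      · rintro ⟨e, he, rfl⟩
        have : p.coeff (e + m) = q.coeff e := by
          rw [hq]; exact Polynomial.coeff_X_pow_mul q m e
        rw [show m + e = e + m by omega, this]; exact he
    have hcards : p.support.card = q.support.card := by
      rw [hsupp, Finset.card_image_of_injective _ (fun a b => by omega)]
    -- elements of s are roots of q
    have hqroot : ∀ x ∈ s, q.eval x = 0 := by
      intro x hx
      have hx0 : (0:ℝ) < x := hspos x hx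
      have := hsroot x hx
      rw [hq, Polynomial.eval_mul, Polynomial.eval_pow, Polynomial.eval_X] at this
      exact (mul_eq_zero.mp this).resolve_left (pow_ne_zero m hx0.ne')
    rcases Finset.eq_empty_or_nonempty s with rfl | ⟨x0, hx0⟩
    · simpa using Finset.card_pos.2 (Polynomial.nonempty_support_iff.2 hp)
    -- q is not constant
    have hqdeg : q.natDegree ≠ 0 := by
      intro h
      have := Polynomial.eq_C_of_natDegree_eq_zero h
      have := hqroot x0 hx0
      rw [Polynomial.eq_C_of_natDegree_eq_zero h] at this
      simp only [Polynomial.eval_C] at this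
      exact hq0 this
    have hd_ne : q.derivative ≠ 0 := fun h => hqdeg
      (Polynomial.natDegree_eq_zero_of_derivative_eq_zero h)
    -- build one derivative root between each pair of consecutive roots
    set r := s.card with hr
    have hr1 : 1 ≤ r := Finset.card_pos.2 ⟨x0, hx0⟩
    set e : Fin r ≃o s := s.orderIsoOfFin rfl with he
    have key : ∀ i : Fin (r - 1), ∃ c : ℝ,
        ((e ⟨i, by omega⟩ : ℝ) < c ∧ c < (e ⟨i + 1, by omega⟩ : ℝ)) ∧
          q.derivative.eval c = 0 := by
      intro i
      have hlt : (e ⟨i, by omega⟩ : s) < e ⟨i + 1, by omega⟩ :=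
        e.strictMono (by simp [Fin.lt_def])
      obtain ⟨c, hc, hc0⟩ := poly_rolle q (a := (e ⟨i, by omega⟩ : ℝ))
        (b := (e ⟨i + 1, by omega⟩ : ℝ)) hlt
        (hqroot _ (e ⟨i, by omega⟩).2) (hqroot _ (e ⟨i + 1, by omega⟩).2)
      exact ⟨c, ⟨hc.1, hc.2⟩, hc0⟩
    choose F hF1 hF2 using key
    have hFmono : ∀ i j : Fin (r - 1), (i : ℕ) < (j : ℕ) → F i < F j := by
      intro i j hlt
      have h1 : F i < (e ⟨i + 1, by omega⟩ : ℝ) := (hF1 i).2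
      have h2 : (e ⟨j, by omega⟩ : ℝ) < F j := (hF1 j).1
      have h3 : (e ⟨(i:ℕ) + 1, by omega⟩ : s) ≤ e ⟨(j:ℕ), by omega⟩ :=
        e.monotone (by simp only [Fin.mk_le_mk]; omega)
      exact lt_of_lt_of_le h1 (le_trans h3 (le_of_lt h2))
    have hFinj : Function.Injective F := by
      intro i j hij
      by_contra hne
      have hne' : (i : ℕ) ≠ (j : ℕ) := fun h => hne (Fin.ext h)
      rcases Nat.lt_or_ge (i:ℕ) (j:ℕ) with h | h
      · exact absurd hij (ne_of_lt (hFmono i j h))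
      · exact absurd hij.symm (ne_of_lt (hFmono j i (by omega)))
    -- apply the IH to the derivative
    have hdcard : q.derivative.support.card ≤ k := by
      have := deriv_support_lt q hq0
      omega
    have hIH := ih q.derivative hd_ne hdcard (Finset.image F Finset.univ)
      (by
        intro x hx
        obtain ⟨i, _, rfl⟩ := Finset.mem_image.mp hx
        have h0 : (0:ℝ) < (e ⟨i, by omega⟩ : ℝ) := by
          have := (e ⟨i, by omega⟩).2
          exact hspos _ this
        exact lt_trans h0 (hF1 i).1)
      (by
        intro x hx
        obtain ⟨i, _, rfl⟩ := Finset.mem_image.mp hx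
        exact hF2 i)
    rw [Finset.card_image_of_injective _ hFinj, Finset.card_univ, Fintype.card_fin] at hIH
    have := deriv_support_lt q hq0
    omega

/-- Generalized Vandermonde (Stäckel) matrix with strictly decreasing exponents
`γ₁ > γ₂ > ⋯ > γₙ = 0` has nonzero determinant at pairwise distinct positive points. -/
theorem stackel_matrix_det_ne_zero (n : ℕ) (hn : 1 ≤ n) (γ : Fin n → ℕ)
    (hγ : StrictAnti γ) (hlast : γ ⟨n - 1, by omega⟩ = 0)
    (lam : Fin n → ℝ) (hpos : ∀ i, 0 < lam i) (hinj : Function.Injective lam) :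
    Matrix.det (Matrix.of fun i j : Fin n => lam i ^ γ j) ≠ 0 := by
  intro hdet
  obtain ⟨v, hv, hMv⟩ := (Matrix.exists_mulVec_eq_zero_iff).mpr hdet
  have hγinj : Function.Injective γ := hγ.injective
  -- the sparse polynomial
  set p : ℝ[X] := ∑ j : Fin n, Polynomial.C (v j) * Polynomial.X ^ (γ j) with hp
  have hcoeff : ∀ j, p.coeff (γ j) = v j := by
    intro j
    rw [hp, Polynomial.finset_sum_coeff]
    rw [Finset.sum_eq_single j]
    · simp
    · intro b _ hbj
      rw [Polynomial.coeff_C_mul, Polynomial.coeff_X_pow,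
        if_neg (fun h : γ j = γ b => hbj (hγinj h).symm), mul_zero]
    · simp
  have hpne : p ≠ 0 := by
    obtain ⟨j, hj⟩ := Function.ne_iff.mp hv
    intro h
    apply hj
    rw [← hcoeff j, h, Polynomial.coeff_zero]
    simp
  have hsupp : p.support ⊆ Finset.univ.image γ := by
    intro d hd
    rw [Polynomial.mem_support_iff] at hd
    by_contra hmem
    apply hd
    rw [hp, Polynomial.finset_sum_coeff]
    apply Finset.sum_eq_zero
    intro j _
    have : γ j ≠ d := fun h => hmem (Finset.mem_image.2 ⟨j, Finset.mem_univ j, h⟩)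
    rw [Polynomial.coeff_C_mul, Polynomial.coeff_X_pow, if_neg (Ne.symm this), mul_zero]
  have hcard : p.support.card ≤ n := le_trans (Finset.card_le_card hsupp)
    (le_trans Finset.card_image_le (by simp))
  -- all the lam i are roots
  have hroot : ∀ i, p.eval (lam i) = 0 := by
    intro i
    have := congrFun hMv i
    simp only [Matrix.mulVec, dotProduct, Matrix.of_apply, Pi.zero_apply] at this
    rw [hp]
    simp only [Polynomial.eval_finset_sum, Polynomial.eval_mul, Polynomial.eval_C,
      Polynomial.eval_pow, Polynomial.eval_X]
    rw [← this]
    exact Finset.sum_congr rfl fun j _ => mul_comm _ _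
  have := roots_lt_support_card n p hpne hcard (Finset.univ.image lam)
    (by rintro x hx; obtain ⟨i, _, rfl⟩ := Finset.mem_image.mp hx; exact hpos i)
    (by rintro x hx; obtain ⟨i, _, rfl⟩ := Finset.mem_image.mp hx; exact hroot i)
  rw [Finset.card_image_of_injective _ hinj, Finset.card_univ, Fintype.card_fin] at this
  omega
end

section
/- Consider the n separation relations ∑_{j=1}^n S_{ij}(λ_i) H_j = U_i(λ_i, μ_i), i = 1,…,n, where S is an invertible Stäckel matrix depending only on positions (row i depends only on λ_i) and U_i depends only on the pair (λ_i, μ_i). Then the functions H_r(λ, μ) = ∑_i (S^{-1})_{ri} U_i(λ_i, μ_i) pairwise Poisson commute with respect to the canonical bracket {λ_i, μ_j} = δ_{ij}. -/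
private lemma aux_diffAt_det {n : ℕ} {M : (Fin n → ℝ) → Matrix (Fin n) (Fin n) ℝ}
    {x : Fin n → ℝ} (h : ∀ a b, DifferentiableAt ℝ (fun y => M y a b) x) :
    DifferentiableAt ℝ (fun y => (M y).det) x := by
  simp only [Matrix.det_apply']
  refine DifferentiableAt.fun_sum fun σ _ => DifferentiableAt.const_mul ?_ _
  exact (HasFDerivAt.finset_prod (u := Finset.univ)
    (fun i _ => (h (σ i) i).hasFDerivAt)).differentiableAt

/-- Partial derivative in the `i`-th coordinate direction. -/
noncomputable def pd {n : ℕ} (i : Fin n) (f : (Fin n → ℝ) → ℝ) (x : Fin n → ℝ) : ℝ :=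
  fderiv ℝ f x (Pi.single i 1)

/-- Stäckel separation relations `∑_j S_{ij}(λ_i) H_j = U_i(λ_i, μ_i)` with an
invertible Stäckel matrix (row `i` depending only on `λ_i`) produce Hamiltonians
`H_r(λ,μ) = ∑_i (S⁻¹)_{ri} U_i(λ_i,μ_i)` that pairwise Poisson commute with
respect to the canonical bracket `{λ_i, μ_j} = δ_{ij}`. -/
theorem stackel_hamiltonians_poisson_commute (n : ℕ)
    (s : Fin n → Fin n → ℝ → ℝ) (U : Fin n → ℝ → ℝ → ℝ)
    (hs : ∀ i j, ContDiff ℝ (⊤ : ℕ∞) (s i j))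
    (hU : ∀ i, ContDiff ℝ (⊤ : ℕ∞) fun p : ℝ × ℝ => U i p.1 p.2)
    (S : (Fin n → ℝ) → Matrix (Fin n) (Fin n) ℝ)
    (hS : S = fun l => Matrix.of fun i j => s i j (l i))
    (H : Fin n → (Fin n → ℝ) → (Fin n → ℝ) → ℝ)
    (hH : H = fun r l μ => ∑ i, (S l)⁻¹ r i * U i (l i) (μ i))
    (l μ : Fin n → ℝ) (hdet : (S l).det ≠ 0) (r m : Fin n) :
    ∑ k, (pd k (fun l' => H r l' μ) l * pd k (fun μ' => H m l μ') μ
        - pd k (fun μ' => H r l μ') μ * pd k (fun l' => H m l' μ) l) = 0 := by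
  classical
  simp only [hH, hS] at hdet ⊢
  have hmu : ∀ j k : Fin n,
      pd k (fun μ' => ∑ p, (Matrix.of fun a b => s a b (l a))⁻¹ j p * U p (l p) (μ' p)) μ
        = (Matrix.of fun a b => s a b (l a))⁻¹ j k *
            fderiv ℝ (fun q : ℝ × ℝ => U k q.1 q.2) (l k, μ k) (0, 1) := by
    intro j k
    have hterm : ∀ p : Fin n, HasFDerivAt
        (fun μ' : Fin n → ℝ => (Matrix.of fun a b => s a b (l a))⁻¹ j p * U p (l p) (μ' p))
        ((Matrix.of fun a b => s a b (l a))⁻¹ j p •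
          ((fderiv ℝ (fun q : ℝ × ℝ => U p q.1 q.2) (l p, μ p)).comp
            ((0 : (Fin n → ℝ) →L[ℝ] ℝ).prod (ContinuousLinearMap.proj p)))) μ := by
      intro p
      have h1 : HasFDerivAt (fun μ' : Fin n → ℝ => ((l p, μ' p) : ℝ × ℝ))
          ((0 : (Fin n → ℝ) →L[ℝ] ℝ).prod (ContinuousLinearMap.proj p)) μ :=
        HasFDerivAt.prodMk (hasFDerivAt_const (l p) μ) (hasFDerivAt_apply p μ)
      exact ((((hU p).differentiable (by simp)) (l p, μ p)).hasFDerivAt.comp μ h1).const_mul _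
    have hsum : HasFDerivAt
        (fun μ' : Fin n → ℝ => ∑ p, (Matrix.of fun a b => s a b (l a))⁻¹ j p * U p (l p) (μ' p))
        (∑ p, (Matrix.of fun a b => s a b (l a))⁻¹ j p •
          ((fderiv ℝ (fun q : ℝ × ℝ => U p q.1 q.2) (l p, μ p)).comp
            ((0 : (Fin n → ℝ) →L[ℝ] ℝ).prod (ContinuousLinearMap.proj p)))) μ :=
      HasFDerivAt.fun_sum fun p _ => hterm p
    show fderiv ℝ _ μ (Pi.single k 1) = _
    rw [hsum.fderiv, ContinuousLinearMap.sum_apply]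
    have heval : ∀ p : Fin n, ((Matrix.of fun a b => s a b (l a))⁻¹ j p •
          ((fderiv ℝ (fun q : ℝ × ℝ => U p q.1 q.2) (l p, μ p)).comp
            ((0 : (Fin n → ℝ) →L[ℝ] ℝ).prod (ContinuousLinearMap.proj p)))) (Pi.single k 1)
        = if p = k then (Matrix.of fun a b => s a b (l a))⁻¹ j k *
            fderiv ℝ (fun q : ℝ × ℝ => U k q.1 q.2) (l k, μ k) (0, 1) else 0 := by
      intro p
      rcases eq_or_ne p k with h | h
      · subst h
        simp [ContinuousLinearMap.smul_apply, ContinuousLinearMap.comp_apply,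
          ContinuousLinearMap.prod_apply, ContinuousLinearMap.proj_apply,
          Pi.single_eq_same, smul_eq_mul]
      · simp [h, ContinuousLinearMap.smul_apply, ContinuousLinearMap.comp_apply,
          ContinuousLinearMap.prod_apply, ContinuousLinearMap.proj_apply,
          Pi.single_eq_of_ne h, Prod.mk_zero_zero, map_zero, smul_zero]
    simp only [heval]
    simp
  have hlam : ∀ j k : Fin n,
      pd k (fun l' => ∑ p, (Matrix.of fun a b => s a b (l' a))⁻¹ j p * U p (l' p) (μ p)) l
        = (Matrix.of fun a b => s a b (l a))⁻¹ j k *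
            (fderiv ℝ (fun q : ℝ × ℝ => U k q.1 q.2) (l k, μ k) (1, 0)
              - ∑ q, (∑ p, (Matrix.of fun a b => s a b (l a))⁻¹ q p * U p (l p) (μ p)) *
                  deriv (s k q) (l k)) := by
    intro j k
    -- derivative of the entries of the Stäckel matrix
    have hsl : ∀ (a b : Fin n) (x : Fin n → ℝ),
        HasFDerivAt (fun l' : Fin n → ℝ => s a b (l' a))
          (deriv (s a b) (x a) • (ContinuousLinearMap.proj a : (Fin n → ℝ) →L[ℝ] ℝ)) x := by
      intro a b x
      have h : HasFDerivAt (s a b ∘ fun l' : Fin n → ℝ => l' a)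
          (deriv (s a b) (x a) • (ContinuousLinearMap.proj a : (Fin n → ℝ) →L[ℝ] ℝ)) x :=
        HasDerivAt.comp_hasFDerivAt x
          (((hs a b).differentiable (by simp) (x a)).hasDerivAt) (hasFDerivAt_apply a x)
      exact h
    -- differentiability of the determinant
    have hdetdiff : ∀ x : Fin n → ℝ, DifferentiableAt ℝ
        (fun l' => (Matrix.of fun a b => s a b (l' a) : Matrix (Fin n) (Fin n) ℝ).det) x := by
      intro x
      exact aux_diffAt_det fun a b => (hsl a b x).differentiableAt
    -- differentiability of the adjugate entries
    have hadjdiff : ∀ (x : Fin n → ℝ) (a b : Fin n), DifferentiableAt ℝ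
        (fun l' => (Matrix.of fun p q => s p q (l' p) : Matrix (Fin n) (Fin n) ℝ).adjugate a b) x := by
      intro x a b
      have hrw : (fun l' : Fin n → ℝ => (Matrix.of fun p q => s p q (l' p) : Matrix (Fin n) (Fin n) ℝ).adjugate a b)
          = fun l' : Fin n → ℝ => ((Matrix.of fun p q => s p q (l' p) : Matrix (Fin n) (Fin n) ℝ).updateRow b
              (Pi.single a 1)).det := by
        funext y; rw [Matrix.adjugate_apply]
      rw [hrw]
      refine aux_diffAt_det fun p q => ?_
      rcases eq_or_ne p b with h | h
      · simp only [Matrix.updateRow_apply, if_pos h]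
        exact differentiableAt_const _
      · simp only [Matrix.updateRow_apply, if_neg h, Matrix.of_apply]
        exact (hsl p q x).differentiableAt
    -- differentiability of the entries of the inverse Stäckel matrix at l
    have hAdiff : ∀ a b : Fin n, DifferentiableAt ℝ
        (fun l' => (Matrix.of fun p q => s p q (l' p) : Matrix (Fin n) (Fin n) ℝ)⁻¹ a b) l := by
      intro a b
      have hrw : (fun l' : Fin n → ℝ => (Matrix.of fun p q => s p q (l' p) : Matrix (Fin n) (Fin n) ℝ)⁻¹ a b)
          = fun l' : Fin n → ℝ => ((Matrix.of fun p q => s p q (l' p) : Matrix (Fin n) (Fin n) ℝ).det)⁻¹ *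
              (Matrix.of fun p q => s p q (l' p) : Matrix (Fin n) (Fin n) ℝ).adjugate a b := by
        funext y
        rw [Matrix.inv_def, Matrix.smul_apply, Ring.inverse_eq_inv, smul_eq_mul]
      rw [hrw]
      exact ((hdetdiff l).inv hdet).mul (hadjdiff l a b)
    -- differentiability of the Hamiltonians in the positions
    have hUldiff : ∀ (p : Fin n) (x : Fin n → ℝ),
        HasFDerivAt (fun l' : Fin n → ℝ => U p (l' p) (μ p))
          ((fderiv ℝ (fun q : ℝ × ℝ => U p q.1 q.2) (x p, μ p)).comp
            ((ContinuousLinearMap.proj p).prod (0 : (Fin n → ℝ) →L[ℝ] ℝ))) x := by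
      intro p x
      have h1 : HasFDerivAt (fun l' : Fin n → ℝ => ((l' p, μ p) : ℝ × ℝ))
          ((ContinuousLinearMap.proj p).prod (0 : (Fin n → ℝ) →L[ℝ] ℝ)) x :=
        HasFDerivAt.prodMk (hasFDerivAt_apply p x) (hasFDerivAt_const (μ p) x)
      exact (((hU p).differentiable (by simp)) (x p, μ p)).hasFDerivAt.comp x h1
    have hHdiff : ∀ q : Fin n, DifferentiableAt ℝ
        (fun l' => ∑ p, (Matrix.of fun a b => s a b (l' a))⁻¹ q p * U p (l' p) (μ p)) l :=
      fun q => DifferentiableAt.fun_sum fun p _ =>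
        (hAdiff q p).mul (hUldiff p l).differentiableAt
    -- eventually, the separation relations hold
    have hev : ∀ᶠ l' in nhds l,
        (Matrix.of fun a b => s a b (l' a) : Matrix (Fin n) (Fin n) ℝ).det ≠ 0 :=
      (hdetdiff l).continuousAt.eventually_ne hdet
    -- the key identity obtained by differentiating the separation relations
    have key : ∀ i : Fin n,
        ∑ q, s i q (l i) * pd k
            (fun l' => ∑ p, (Matrix.of fun a b => s a b (l' a))⁻¹ q p * U p (l' p) (μ p)) l
          = (if i = k then fderiv ℝ (fun q : ℝ × ℝ => U k q.1 q.2) (l k, μ k) (1, 0)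
              - ∑ q, (∑ p, (Matrix.of fun a b => s a b (l a))⁻¹ q p * U p (l p) (μ p)) *
                  deriv (s k q) (l k) else 0) := by
      intro i
      have hG : HasFDerivAt
          (fun l' : Fin n → ℝ => ∑ q, s i q (l' i) *
            (∑ p, (Matrix.of fun a b => s a b (l' a))⁻¹ q p * U p (l' p) (μ p)))
          (∑ q, (s i q (l i) • fderiv ℝ
              (fun l' => ∑ p, (Matrix.of fun a b => s a b (l' a))⁻¹ q p * U p (l' p) (μ p)) l
            + (∑ p, (Matrix.of fun a b => s a b (l a))⁻¹ q p * U p (l p) (μ p)) •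
                (deriv (s i q) (l i) • (ContinuousLinearMap.proj i : (Fin n → ℝ) →L[ℝ] ℝ)))) l :=
        HasFDerivAt.fun_sum fun q _ => (hsl i q l).mul (hHdiff q).hasFDerivAt
      have heq : (fun l' : Fin n → ℝ => ∑ q, s i q (l' i) *
            (∑ p, (Matrix.of fun a b => s a b (l' a))⁻¹ q p * U p (l' p) (μ p)))
          =ᶠ[nhds l] fun l' => U i (l' i) (μ i) := by
        filter_upwards [hev] with y hy
        have hy' : IsUnit (Matrix.of fun a b => s a b (y a) : Matrix (Fin n) (Fin n) ℝ).det :=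
          isUnit_iff_ne_zero.mpr hy
        have hone := Matrix.mul_nonsing_inv _ hy'
        calc ∑ q, s i q (y i) * (∑ p, (Matrix.of fun a b => s a b (y a))⁻¹ q p * U p (y p) (μ p))
            = ∑ p, ((Matrix.of fun a b => s a b (y a) : Matrix (Fin n) (Fin n) ℝ) *
                (Matrix.of fun a b => s a b (y a))⁻¹) i p * U p (y p) (μ p) := by
              simp only [Finset.mul_sum, Matrix.mul_apply, Finset.sum_mul]
              rw [Finset.sum_comm]
              refine Finset.sum_congr rfl fun q _ => Finset.sum_congr rfl fun p _ => ?_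
              simp [Matrix.of_apply, mul_assoc]
          _ = U i (y i) (μ i) := by
              rw [hone]
              simp [Matrix.one_apply]
      have hfeq : (∑ q, (s i q (l i) • fderiv ℝ
              (fun l' => ∑ p, (Matrix.of fun a b => s a b (l' a))⁻¹ q p * U p (l' p) (μ p)) l
            + (∑ p, (Matrix.of fun a b => s a b (l a))⁻¹ q p * U p (l p) (μ p)) •
                (deriv (s i q) (l i) • (ContinuousLinearMap.proj i : (Fin n → ℝ) →L[ℝ] ℝ))))
          = (fderiv ℝ (fun q : ℝ × ℝ => U i q.1 q.2) (l i, μ i)).comp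
              ((ContinuousLinearMap.proj i).prod (0 : (Fin n → ℝ) →L[ℝ] ℝ)) := by
        rw [← hG.fderiv, ← (hUldiff i l).fderiv]
        exact heq.fderiv_eq
      have heval := congrArg
        (fun T : (Fin n → ℝ) →L[ℝ] ℝ => T (Pi.single k 1)) hfeq
      simp only [ContinuousLinearMap.sum_apply, ContinuousLinearMap.add_apply,
        ContinuousLinearMap.smul_apply, ContinuousLinearMap.comp_apply,
        ContinuousLinearMap.prod_apply, ContinuousLinearMap.proj_apply,
        ContinuousLinearMap.zero_apply, smul_eq_mul] at heval
      rcases eq_or_ne i k with h | h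
      · subst h
        rw [if_pos rfl]
        simp only [Pi.single_eq_same, mul_one] at heval
        rw [Finset.sum_add_distrib] at heval
        simp only [pd]
        exact eq_sub_of_add_eq heval
      · rw [if_neg h]
        simp only [Pi.single_eq_of_ne h, mul_zero, zero_mul, add_zero,
          Prod.mk_zero_zero, map_zero] at heval
        simp only [pd]
        exact heval
    -- solve the linear system
    have hunit : IsUnit (Matrix.of fun a b => s a b (l a) : Matrix (Fin n) (Fin n) ℝ).det :=
      isUnit_iff_ne_zero.mpr hdet
    have hmv : (Matrix.of fun a b => s a b (l a) : Matrix (Fin n) (Fin n) ℝ).mulVec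
        (fun q => pd k
          (fun l' => ∑ p, (Matrix.of fun a b => s a b (l' a))⁻¹ q p * U p (l' p) (μ p)) l)
        = Pi.single k (fderiv ℝ (fun q : ℝ × ℝ => U k q.1 q.2) (l k, μ k) (1, 0)
            - ∑ q, (∑ p, (Matrix.of fun a b => s a b (l a))⁻¹ q p * U p (l p) (μ p)) *
                deriv (s k q) (l k)) := by
      funext i
      simp only [Matrix.mulVec, dotProduct, Matrix.of_apply]
      rw [key i, Pi.single_apply]
    have hsolve := congrArg
      (fun w => (Matrix.of fun a b => s a b (l a) : Matrix (Fin n) (Fin n) ℝ)⁻¹.mulVec w) hmv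
    simp only [Matrix.mulVec_mulVec, Matrix.nonsing_inv_mul _ hunit, Matrix.one_mulVec,
      Matrix.mulVec_single] at hsolve
    have := congrFun hsolve j
    simpa using this
  refine Finset.sum_eq_zero fun k _ => ?_
  rw [hlam r k, hlam m k, hmu r k, hmu m k]
  ring
end

section
/- In orthogonal coordinates for a diagonal metric G, with Γ_i = g_{ii} G^{ii} Γ_{ii}^i-type metrically contracted Christoffel symbols given by Γ_i = (1/2)(∂_i det G)/det G − (∂_i G^{ii})/G^{ii}, the Benenti metric G_{B,f} = diag(f_1(λ_1)/Δ_1, …, f_n(λ_n)/Δ_n) with Δ_i = ∏_{j≠i}(λ_i − λ_j) satisfies Γ_i = −(1/2) f_i'(λ_i)/f_i(λ_i). In particular ∂_j Γ_i = 0 for j ≠ i (the Robertson condition). -/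
namespace BenentiAux

open Finset

lemma pd_eq_deriv {n : ℕ} (i : Fin n) (F : (Fin n → ℝ) → ℝ) (x : Fin n → ℝ)
    (h : DifferentiableAt ℝ F x) :
    pd i F x = deriv (fun t => F (x + (t - x i) • (Pi.single i 1 : Fin n → ℝ))) (x i) := by
  have hφ : HasDerivAt (fun t : ℝ => x + (t - x i) • (Pi.single i 1 : Fin n → ℝ))
      ((Pi.single i 1 : Fin n → ℝ)) (x i) := by
    simpa using (((hasDerivAt_id (x i)).sub_const (x i)).smul_const
      ((Pi.single i 1 : Fin n → ℝ))).const_add x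
  have hx : x + (x i - x i) • (Pi.single i 1 : Fin n → ℝ) = x := by simp
  have hF : HasFDerivAt F (fderiv ℝ F x) (x + (x i - x i) • (Pi.single i 1 : Fin n → ℝ)) := by
    rw [hx]; exact h.hasFDerivAt
  have hc := hF.comp_hasDerivAt (x i) hφ
  exact hc.deriv.symm

lemma diffAt_finset_prod {n : ℕ} {u : Finset (Fin n)} {g : Fin n → (Fin n → ℝ) → ℝ}
    {x : Fin n → ℝ} (h : ∀ j ∈ u, DifferentiableAt ℝ (g j) x) :
    DifferentiableAt ℝ (fun y => ∏ j ∈ u, g j y) x :=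
  (HasFDerivAt.finset_prod fun j hj => (h j hj).hasFDerivAt).differentiableAt

/-- Main computation: value of the contracted Christoffel symbol. -/
lemma gamma_val (n : ℕ) (f : Fin n → ℝ → ℝ) (hf : ∀ i, ContDiff ℝ (⊤ : ℕ∞) (f i))
    (d : Fin n → (Fin n → ℝ) → ℝ)
    (hd : d = fun i l => f i (l i) / ∏ j ∈ Finset.univ.erase i, (l i - l j))
    (i : Fin n) (l : Fin n → ℝ) (hl : Function.Injective l)
    (hf0 : ∀ j, f j (l j) ≠ 0) :
    (1 / 2) * pd i (fun y => ∏ j, d j y) l / (∏ j, d j l) - pd i (d i) l / d i l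
      = -(1 / 2) * deriv (f i) (l i) / f i (l i) := by
  classical
  subst hd
  beta_reduce
  set φ : ℝ → (Fin n → ℝ) := fun t => l + (t - l i) • (Pi.single i 1 : Fin n → ℝ) with hφdef
  have hφi : ∀ t, φ t i = t := by intro t; simp [hφdef]
  have hφk : ∀ t, ∀ k, k ≠ i → φ t k = l k := by
    intro t k hk; simp [hφdef, Pi.single_eq_of_ne hk]
  have hφ0 : φ (l i) = l := by simp [hφdef]
  set q : ℝ → ℝ := fun t => ∏ k ∈ univ.erase i, (t - l k) with hqdef
  set A : ℝ := ∏ j ∈ univ.erase i, f j (l j) with hA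
  set b : Fin n → ℝ := fun j => ∏ k ∈ (univ.erase j).erase i, (l j - l k) with hb
  set B : ℝ := ∏ j ∈ univ.erase i, b j with hB
  set ε : ℝ := (-1 : ℝ) ^ (univ.erase i).card with he
  -- identity for d i along the curve
  have I1 : ∀ t, f i (φ t i) / (∏ j ∈ univ.erase i, (φ t i - φ t j)) = f i t / q t := by
    intro t
    rw [hφi]
    congr 1
    exact Finset.prod_congr rfl fun j hj => by rw [hφk t j (Finset.mem_erase.mp hj).1]
  -- identity for the full product along the curve
  have I2 : ∀ t, (∏ j, f j (φ t j) / (∏ k ∈ univ.erase j, (φ t j - φ t k)))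
      = f i t * A / (q t ^ 2 * (ε * B)) := by
    intro t
    rw [← Finset.mul_prod_erase univ _ (mem_univ i), I1]
    have step : ∀ j ∈ univ.erase i,
        f j (φ t j) / (∏ k ∈ univ.erase j, (φ t j - φ t k))
          = f j (l j) / ((l j - t) * b j) := by
      intro j hj
      have hji : j ≠ i := (Finset.mem_erase.mp hj).1
      rw [hφk t j hji]
      congr 1
      have hi_mem : i ∈ univ.erase j := Finset.mem_erase.mpr ⟨Ne.symm hji, mem_univ i⟩
      rw [← Finset.mul_prod_erase _ _ hi_mem, hφi]
      congr 1
      exact Finset.prod_congr rfl fun k hk => by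
        rw [hφk t k (Finset.mem_erase.mp hk).1]
    rw [Finset.prod_congr rfl step]
    rw [Finset.prod_div_distrib, ← hA, Finset.prod_mul_distrib, ← hB]
    have hneg : (∏ j ∈ univ.erase i, (l j - t)) = ε * q t := by
      have : ∀ j ∈ univ.erase i, l j - t = (-1) * (t - l j) := by intro j _; ring
      rw [Finset.prod_congr rfl this, Finset.prod_mul_distrib, Finset.prod_const]
    rw [hneg, div_mul_div_comm]
    rw [show q t * (ε * q t * B) = q t ^ 2 * (ε * B) by ring]
  -- nonvanishing facts
  have hQ0 : q (l i) ≠ 0 := by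
    refine Finset.prod_ne_zero_iff.mpr fun k hk => sub_ne_zero.mpr fun h => ?_
    exact (Finset.mem_erase.mp hk).1 (hl h).symm
  have hAne : A ≠ 0 := Finset.prod_ne_zero_iff.mpr fun j _ => hf0 j
  have hBne : B ≠ 0 := by
    refine Finset.prod_ne_zero_iff.mpr fun j _ => ?_
    refine Finset.prod_ne_zero_iff.mpr fun k hk => sub_ne_zero.mpr fun h => ?_
    exact (Finset.mem_erase.mp (Finset.mem_of_mem_erase hk)).1 (hl h).symm
  have hεne : ε ≠ 0 := pow_ne_zero _ (by norm_num)
  have hcne : ε * B ≠ 0 := mul_ne_zero hεne hBne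
  have hF0 : f i (l i) ≠ 0 := hf0 i
  -- derivatives of q and f i
  have hqd : DifferentiableAt ℝ q (l i) :=
    DifferentiableAt.fun_finsetProd fun k _ => (differentiableAt_id.sub_const (l k))
  have hq' : HasDerivAt q (deriv q (l i)) (l i) := hqd.hasDerivAt
  have hfd : HasDerivAt (f i) (deriv (f i) (l i)) (l i) :=
    (((hf i).differentiable (by simp)) (l i)).hasDerivAt
  -- differentiability of the metric coefficients
  have hdiff : ∀ j : Fin n, DifferentiableAt ℝ
      (fun y : Fin n → ℝ => f j (y j) / ∏ k ∈ univ.erase j, (y j - y k)) l := by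
    intro j
    have hnum : DifferentiableAt ℝ (fun y : Fin n → ℝ => f j (y j)) l :=
      ((((hf j).differentiable (by simp)) (l j)).comp l (differentiableAt_apply j l))
    have hden : DifferentiableAt ℝ
        (fun y : Fin n → ℝ => ∏ k ∈ univ.erase j, (y j - y k)) l :=
      diffAt_finset_prod fun k _ =>
        (differentiableAt_apply j l).sub (differentiableAt_apply k l)
    have hden0 : (∏ k ∈ univ.erase j, (l j - l k)) ≠ 0 := by
      refine Finset.prod_ne_zero_iff.mpr fun k hk => sub_ne_zero.mpr fun h => ?_
      exact (Finset.mem_erase.mp hk).1 (hl h).symm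
    simp only [div_eq_mul_inv]
    exact hnum.mul (hden.inv hden0)
  have hdiffP : DifferentiableAt ℝ
      (fun y : Fin n → ℝ => ∏ j, f j (y j) / ∏ k ∈ univ.erase j, (y j - y k)) l :=
    diffAt_finset_prod fun j _ => hdiff j
  -- compute pd of the product
  have hpdP : pd i (fun y : Fin n → ℝ =>
        ∏ j, f j (y j) / ∏ k ∈ univ.erase j, (y j - y k)) l
      = ((deriv (f i) (l i) * A) * (q (l i) ^ 2 * (ε * B))
          - (f i (l i) * A) * (((2 : ℕ) * q (l i) ^ (2 - 1) * deriv q (l i)) * (ε * B)))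
        / (q (l i) ^ 2 * (ε * B)) ^ 2 := by
    rw [pd_eq_deriv i _ l hdiffP]
    have : (fun t => (fun y : Fin n → ℝ =>
        ∏ j, f j (y j) / ∏ k ∈ univ.erase j, (y j - y k)) (φ t))
        = fun t => f i t * A / (q t ^ 2 * (ε * B)) := by
      funext t; exact I2 t
    rw [show (fun t => (fun y : Fin n → ℝ =>
        ∏ j, f j (y j) / ∏ k ∈ univ.erase j, (y j - y k))
          (l + (t - l i) • (Pi.single i 1 : Fin n → ℝ))) = fun t => f i t * A / (q t ^ 2 * (ε * B))
        from this]
    have hden : HasDerivAt (fun t => q t ^ 2 * (ε * B))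
        (((2 : ℕ) * q (l i) ^ (2 - 1) * deriv q (l i)) * (ε * B)) (l i) :=
      (hq'.pow 2).mul_const (ε * B)
    have hden0 : q (l i) ^ 2 * (ε * B) ≠ 0 := mul_ne_zero (pow_ne_zero _ hQ0) hcne
    exact ((hfd.mul_const A).div hden hden0).deriv
  -- compute pd of d i
  have hpdd : pd i (fun y : Fin n → ℝ =>
        f i (y i) / ∏ k ∈ univ.erase i, (y i - y k)) l
      = (deriv (f i) (l i) * q (l i) - f i (l i) * deriv q (l i)) / q (l i) ^ 2 := by
    rw [pd_eq_deriv i _ l (hdiff i)]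
    have : (fun t => (fun y : Fin n → ℝ =>
        f i (y i) / ∏ k ∈ univ.erase i, (y i - y k)) (l + (t - l i) • (Pi.single i 1 : Fin n → ℝ)))
        = fun t => f i t / q t := by
      funext t; exact I1 t
    rw [this]
    exact (hfd.div hq' hQ0).deriv
  -- values at the base point
  have hvalP : (∏ j, f j (l j) / ∏ k ∈ univ.erase j, (l j - l k))
      = f i (l i) * A / (q (l i) ^ 2 * (ε * B)) := by
    have h := I2 (l i)
    rwa [hφ0] at h
  have hvald : (f i (l i) / ∏ k ∈ univ.erase i, (l i - l k)) = f i (l i) / q (l i) := rfl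
  rw [hpdP, hpdd, hvalP, hvald]
  push_cast
  field_simp
  ring

end BenentiAux

/-- For the Benenti metric `G_{B,f} = diag(f_i(λ_i)/Δ_i)` with
`Δ_i = ∏_{j≠i}(λ_i - λ_j)`, the metrically contracted Christoffel symbols
`Γ_i = (1/2)(∂_i det G)/det G - (∂_i G^{ii})/G^{ii}` satisfy
`Γ_i = -(1/2) f_i'(λ_i)/f_i(λ_i)`; in particular `∂_j Γ_i = 0` for `j ≠ i`
(the Robertson condition). -/
theorem benenti_robertson_condition (n : ℕ) (f : Fin n → ℝ → ℝ)
    (hf : ∀ i, ContDiff ℝ (⊤ : ℕ∞) (f i))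
    (d : Fin n → (Fin n → ℝ) → ℝ)
    (hd : d = fun i l => f i (l i) / ∏ j ∈ Finset.univ.erase i, (l i - l j))
    (Γ : Fin n → (Fin n → ℝ) → ℝ)
    (hΓ : Γ = fun i l =>
      (1 / 2) * pd i (fun y => ∏ j, d j y) l / (∏ j, d j l) - pd i (d i) l / d i l)
    (l : Fin n → ℝ) (hl : Function.Injective l) (hf0 : ∀ i, f i (l i) ≠ 0) :
    (∀ i, Γ i l = -(1 / 2) * deriv (f i) (l i) / f i (l i)) ∧
    (∀ i j, j ≠ i → pd j (Γ i) l = 0) := by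
  have key : ∀ (y : Fin n → ℝ), Function.Injective y → (∀ j, f j (y j) ≠ 0) →
      ∀ i, Γ i y = -(1 / 2) * deriv (f i) (y i) / f i (y i) := by
    intro y hy hy0 i
    rw [hΓ]
    exact BenentiAux.gamma_val n f hf d hd i y hy hy0
  refine ⟨fun i => key l hl hf0 i, fun i j hji => ?_⟩
  -- eventual equality near l
  have hev : ∀ᶠ y in nhds l, Function.Injective y ∧ ∀ k, f k (y k) ≠ 0 := by
    have h1 : ∀ᶠ y in nhds l, ∀ a : Fin n, ∀ b : Fin n, a ≠ b → y a ≠ y b := by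
      rw [Filter.eventually_all]
      intro a
      rw [Filter.eventually_all]
      intro b
      by_cases hab : a = b
      · subst hab
        filter_upwards with y h; exact absurd rfl h
      · have hcont : ContinuousAt (fun y : Fin n → ℝ => y a - y b) l :=
          ((continuous_apply a).sub (continuous_apply b)).continuousAt
        have hne : l a - l b ≠ 0 := sub_ne_zero.mpr fun h => hab (hl h)
        filter_upwards [hcont.eventually_ne hne] with y hy _
        exact fun h => hy (by rw [h, sub_self])
    have h2 : ∀ᶠ y in nhds l, ∀ k, f k (y k) ≠ 0 := by
      rw [Filter.eventually_all]
      intro k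
      have hcont : ContinuousAt (fun y : Fin n → ℝ => f k (y k)) l :=
        ((hf k).continuous.continuousAt).comp (continuous_apply k).continuousAt
      exact hcont.eventually_ne (hf0 k)
    filter_upwards [h1, h2] with y hy1 hy2
    exact ⟨fun a b hab => by by_contra hne; exact hy1 a b hne hab, hy2⟩
  set g : ℝ → ℝ := fun t => -(1 / 2) * deriv (f i) t / f i t with hg
  have heq : Γ i =ᶠ[nhds l] fun y => g (y i) := by
    filter_upwards [hev] with y ⟨hy1, hy2⟩
    exact key y hy1 hy2 i
  have hfderiv : Differentiable ℝ (deriv (f i)) :=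
    (contDiff_infty_iff_deriv.mp
      (contDiff_infty_iff_deriv.mp ((hf i).of_le (by simp))).2).1
  have hgd : DifferentiableAt ℝ g (l i) := by
    apply DifferentiableAt.div
    · exact (differentiableAt_const _).mul (hfderiv (l i))
    · exact ((hf i).differentiable (by simp)) (l i)
    · exact hf0 i
  have hproj : HasFDerivAt (fun y : Fin n → ℝ => y i)
      (ContinuousLinearMap.proj i : (Fin n → ℝ) →L[ℝ] ℝ) l :=
    (ContinuousLinearMap.proj i : (Fin n → ℝ) →L[ℝ] ℝ).hasFDerivAt
  have hG : HasFDerivAt (fun y : Fin n → ℝ => g (y i))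
      (deriv g (l i) • (ContinuousLinearMap.proj i : (Fin n → ℝ) →L[ℝ] ℝ)) l :=
    by have := (hgd.hasDerivAt).comp_hasFDerivAt l hproj; exact this
  have : pd j (Γ i) l = pd j (fun y => g (y i)) l := by
    unfold pd
    rw [heq.fderiv_eq]
  rw [this]
  unfold pd
  rw [hG.fderiv]
  simp only [ContinuousLinearMap.smul_apply, ContinuousLinearMap.proj_apply,
    Pi.single_eq_of_ne (Ne.symm hji), smul_eq_mul, mul_zero]
end

section
/- Let f(λ) be a polynomial of degree at most 1 in one variable and n = 3. The diagonal metric G = diag(f(λ_1)/Δ_1, f(λ_2)/Δ_2, f(λ_3)/Δ_3) with Δ_i = ∏_{j≠i}(λ_i − λ_j), transformed to the coordinates x defined by ρ_1(λ) = x_1, ρ_2(λ) = x_2 + x_1²/4, ρ_3(λ) = −x_3²/4 (Viète polynomials ρ_i), has for f(λ) = λ constant matrix components G = [[0,1,0],[1,0,0],[0,0,1]]; in particular G is flat. -/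
/-- The `j`-th coordinate projection as a continuous linear map. -/
noncomputable def P (j : Fin 3) : (Fin 3 → ℝ) →L[ℝ] ℝ := ContinuousLinearMap.proj j

@[simp] lemma P_apply (j : Fin 3) (x : Fin 3 → ℝ) : P j x = x j := rfl

lemma pd_hasFDerivAt {n : ℕ} {f : (Fin n → ℝ) → ℝ} {L : (Fin n → ℝ) →L[ℝ] ℝ}
    {x : Fin n → ℝ} (h : HasFDerivAt f L x) (i : Fin n) :
    pd i f x = L (Pi.single i 1) := by rw [pd, h.fderiv]

set_option maxHeartbeats 1000000 in
/-- The Benenti metric `G = diag(λ_i/Δ_i)` (`f(λ) = λ`, `n = 3`), transformed via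
`G'^{ab} = (∂x_a/∂λ_i)(∂x_b/∂λ_j) G^{ij}` to the coordinates `x` defined by
`ρ_1 = x_1`, `ρ_2 = x_2 + x_1²/4`, `ρ_3 = -x_3²/4`, has constant components
`[[0,1,0],[1,0,0],[0,0,1]]`; in particular it is flat. -/
theorem benenti_metric_flat_coordinates (X : Fin 3 → (Fin 3 → ℝ) → ℝ)
    (hX0 : X 0 = fun l => -(l 0 + l 1 + l 2))
    (hX1 : X 1 = fun l =>
      (l 0 * l 1 + l 0 * l 2 + l 1 * l 2) - (l 0 + l 1 + l 2) ^ 2 / 4)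
    (hX2 : X 2 = fun l => 2 * Real.sqrt (l 0 * l 1 * l 2))
    (l : Fin 3 → ℝ) (hl : Function.Injective l) (hpos : 0 < l 0 * l 1 * l 2)
    (a b : Fin 3) :
    ∑ i, pd i (X a) l * pd i (X b) l *
        (l i / ∏ j ∈ Finset.univ.erase i, (l i - l j)) =
      !![0, 1, 0; 1, 0, 0; 0, 0, 1] a b := by
  have hp : ∀ j : Fin 3, HasFDerivAt (fun l : Fin 3 → ℝ => l j)
      (P j) l := fun j => by exact hasFDerivAt_apply j l
  have hne : (l 0 : ℝ) * l 1 * l 2 ≠ 0 := ne_of_gt hpos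
  have hl0 : l 0 ≠ 0 := fun h => hne (by rw [h]; ring)
  have hl1 : l 1 ≠ 0 := fun h => hne (by rw [h]; ring)
  have hl2 : l 2 ≠ 0 := fun h => hne (by rw [h]; ring)
  have hr : Real.sqrt (l 0 * l 1 * l 2) ≠ 0 := ne_of_gt (Real.sqrt_pos.mpr hpos)
  have hr2 : Real.sqrt (l 0 * l 1 * l 2) ^ 2 = l 0 * l 1 * l 2 := Real.sq_sqrt hpos.le
  have h01 : l 0 - l 1 ≠ 0 := sub_ne_zero.mpr (hl.ne (by decide))
  have h02 : l 0 - l 2 ≠ 0 := sub_ne_zero.mpr (hl.ne (by decide))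
  have h12 : l 1 - l 2 ≠ 0 := sub_ne_zero.mpr (hl.ne (by decide))
  have h10 : l 1 - l 0 ≠ 0 := sub_ne_zero.mpr (hl.ne (by decide))
  have h20 : l 2 - l 0 ≠ 0 := sub_ne_zero.mpr (hl.ne (by decide))
  have h21 : l 2 - l 1 ≠ 0 := sub_ne_zero.mpr (hl.ne (by decide))
  have hs : HasFDerivAt (fun l : Fin 3 → ℝ => l 0 + l 1 + l 2)
      (P 0 + P 1 + P 2) l :=
    ((hp 0).add (hp 1)).add (hp 2)
  have h0 : HasFDerivAt (X 0)
      (-(P 0 + P 1 + P 2)) l := by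
    rw [hX0]; exact hs.neg
  have h1 : HasFDerivAt (X 1)
      (((l 0 • P 1 + l 1 • P 0) +
        (l 0 • P 2 + l 2 • P 0) +
        (l 1 • P 2 + l 2 • P 1)) -
        (1/(4:ℝ)) • ((l 0 + l 1 + l 2) • (P 0 + P 1 + P 2) +
          (l 0 + l 1 + l 2) • (P 0 + P 1 + P 2))) l := by
    rw [hX1]
    have heq : (fun l : Fin 3 → ℝ =>
        (l 0 * l 1 + l 0 * l 2 + l 1 * l 2) - (l 0 + l 1 + l 2) ^ 2 / 4)
        = fun l : Fin 3 → ℝ => (l 0 * l 1 + l 0 * l 2 + l 1 * l 2) -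
            (1/4) * ((l 0 + l 1 + l 2) * (l 0 + l 1 + l 2)) := by
      funext m; ring
    rw [heq]
    exact ((((hp 0).mul (hp 1)).add ((hp 0).mul (hp 2))).add ((hp 1).mul (hp 2))).sub
      ((hs.mul hs).const_mul (1/4))
  have hprod : HasFDerivAt (fun l : Fin 3 → ℝ => l 0 * l 1 * l 2)
      ((l 0 * l 1) • P 2 +
        l 2 • (l 0 • P 1 + l 1 • P 0)) l :=
    ((hp 0).mul (hp 1)).mul (hp 2)
  have h2 : HasFDerivAt (X 2)
      ((2:ℝ) • ((1 / (2 * Real.sqrt (l 0 * l 1 * l 2))) •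
        ((l 0 * l 1) • P 2 +
          l 2 • (l 0 • P 1 + l 1 • P 0)))) l := by
    rw [hX2]; exact (hprod.sqrt hne).const_mul 2
  have hd0 : ∀ i, pd i (X 0) l = -1 := by
    intro i
    rw [pd_hasFDerivAt h0]
    fin_cases i <;>
      simp [P_apply, Pi.single_apply]
  have hd1 : ∀ i, pd i (X 1) l = (l 0 + l 1 + l 2) / 2 - l i := by
    intro i
    rw [pd_hasFDerivAt h1]
    fin_cases i <;>
      simp [P_apply, Pi.single_apply, smul_eq_mul] <;> ring
  have hd2 : ∀ i, pd i (X 2) l = l 0 * l 1 * l 2 / (l i * Real.sqrt (l 0 * l 1 * l 2)) := by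
    intro i
    rw [pd_hasFDerivAt h2]
    fin_cases i <;>
      simp [P_apply, Pi.single_apply, smul_eq_mul] <;>
      field_simp <;> ring
  have e0 : (Finset.univ.erase (0 : Fin 3)) = {1, 2} := by decide
  have e1 : (Finset.univ.erase (1 : Fin 3)) = {0, 2} := by decide
  have e2 : (Finset.univ.erase (2 : Fin 3)) = {0, 1} := by decide
  rw [Fin.sum_univ_three, e0, e1, e2]
  rw [Finset.prod_insert (by decide), Finset.prod_singleton,
    Finset.prod_insert (by decide), Finset.prod_singleton,
    Finset.prod_insert (by decide), Finset.prod_singleton]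
  have hsq : ∀ x : ℝ, l 0 * l 1 * l 2 / (x * Real.sqrt (l 0 * l 1 * l 2)) *
      (l 0 * l 1 * l 2 / (x * Real.sqrt (l 0 * l 1 * l 2))) = l 0 * l 1 * l 2 / (x * x) := by
    intro x
    rw [div_mul_div_comm, show x * Real.sqrt (l 0 * l 1 * l 2) *
        (x * Real.sqrt (l 0 * l 1 * l 2)) = x * x * (l 0 * l 1 * l 2) from by
      rw [mul_mul_mul_comm, Real.mul_self_sqrt hpos.le]]
    rcases eq_or_ne x 0 with h | h
    · simp [h]
    · field_simp
  clear hp hs h0 h1 h2 hprod hX0 hX1 hX2 e0 e1 e2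
  fin_cases a <;> fin_cases b <;>
    simp [Fin.reduceFinMk, Fin.isValue, hd0, hd1, hd2, Matrix.cons_val', Matrix.cons_val_zero,
      Matrix.cons_val_one, Matrix.head_cons, Matrix.empty_val', Matrix.cons_val_fin_one,
      Matrix.head_fin_const, Matrix.cons_val_two, Matrix.tail_cons, Matrix.vecHead,
      Matrix.vecTail, Function.comp] <;>
    (try rw [hsq (l 0), hsq (l 1), hsq (l 2)]) <;> field_simp <;> ring
end
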